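/- arXiv:2501.13388 — 2 statements merged into one kernel-verified Lean document; each statement's English description precedes it below -/
import Mathlib

section
/- Let p_a, p_b, p_c, p_d, p_e ∈ ℝ² with p_a, p_b, p_c not collinear and also p_b, p_c, p_d not collinear, and ρ > 0. If the 3×3 determinant condition |A_r A_g| ≠ 0 holds (where A_r encodes the three resistance measurements R(e,a,b,c), R(e,a,c,d), R(e,a,d,b) and A_g the affine geometric relation expressing l_{ae} through l_{be}, l_{ce}, l_{de}), then the triple (l_{be}, l_{ce}, l_{de}) of squared distances is uniquely determined by the measurements and the reference positions, and consequently p_e is uniquely determined. -/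
open Matrix

noncomputable def fourProbeR (ρ : ℝ) (pa pb pc pd : EuclideanSpace ℝ (Fin 2)) : ℝ :=
  (ρ / (2 * Real.pi)) *
    Real.log ((‖pb - pd‖ * ‖pa - pc‖) / (‖pa - pb‖ * ‖pc - pd‖))

/-- 2x2 determinant of the matrix with columns `p_y - p_x` and `p_z - p_x`. -/
noncomputable def detV (px py pz : EuclideanSpace ℝ (Fin 2)) : ℝ :=
  (py - px) 0 * (pz - px) 1 - (py - px) 1 * (pz - px) 0

lemma esq (x y : EuclideanSpace ℝ (Fin 2)) :
    ‖x - y‖ ^ 2 = (x 0 - y 0) ^ 2 + (x 1 - y 1) ^ 2 := by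
  rw [EuclideanSpace.norm_eq, Real.sq_sqrt (by positivity)]
  simp [Fin.sum_univ_two]

lemma detV_coord (px py pz : EuclideanSpace ℝ (Fin 2)) :
    detV px py pz = (py 0 - px 0) * (pz 1 - px 1) - (py 1 - px 1) * (pz 0 - px 0) := by
  simp [detV]

lemma Dlem (ρ : ℝ) (hρ : 0 < ρ) (q pa pb pc : EuclideanSpace ℝ (Fin 2))
    (hqa : q ≠ pa) (hqb : q ≠ pb) (hac : pa ≠ pc) (hbc : pb ≠ pc) :
    Real.exp (4 * Real.pi * fourProbeR ρ q pa pb pc / ρ) * ‖pb - pc‖ ^ 2 * ‖pa - q‖ ^ 2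
      = ‖pa - pc‖ ^ 2 * ‖pb - q‖ ^ 2 := by
  have h1 : (0:ℝ) < ‖pa - pc‖ := by rw [norm_pos_iff, sub_ne_zero]; exact hac
  have h2 : (0:ℝ) < ‖q - pb‖ := by rw [norm_pos_iff, sub_ne_zero]; exact hqb
  have h3 : (0:ℝ) < ‖q - pa‖ := by rw [norm_pos_iff, sub_ne_zero]; exact hqa
  have h4 : (0:ℝ) < ‖pb - pc‖ := by rw [norm_pos_iff, sub_ne_zero]; exact hbc
  set r : ℝ := (‖pa - pc‖ * ‖q - pb‖) / (‖q - pa‖ * ‖pb - pc‖) with hr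
  have hrpos : 0 < r := by positivity
  have hπ := Real.pi_ne_zero
  have hexp : 4 * Real.pi * fourProbeR ρ q pa pb pc / ρ = Real.log (r ^ 2) := by
    rw [Real.log_pow]
    unfold fourProbeR
    push_cast
    field_simp
    ring
  rw [hexp, Real.exp_log (by positivity), hr, norm_sub_rev pa q, norm_sub_rev pb q]
  field_simp

lemma geo (pa pb pc pd q q' : EuclideanSpace ℝ (Fin 2)) :
    detV pb pc pd * (‖pa - q‖ ^ 2 - ‖pa - q'‖ ^ 2)
      = detV pa pc pd * (‖pb - q‖ ^ 2 - ‖pb - q'‖ ^ 2)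
      + detV pa pd pb * (‖pc - q‖ ^ 2 - ‖pc - q'‖ ^ 2)
      + detV pa pb pc * (‖pd - q‖ ^ 2 - ‖pd - q'‖ ^ 2) := by
  simp only [esq, detV_coord]
  ring

lemma det_ne_zero_of_li (u v : EuclideanSpace ℝ (Fin 2))
    (h : LinearIndependent ℝ ![u, v]) :
    u 0 * v 1 - u 1 * v 0 ≠ 0 := by
  intro hd
  rw [LinearIndependent.pair_iff] at h
  by_cases hu1 : u 1 = 0
  · by_cases hu0 : u 0 = 0
    · have := (h 1 0 (by
        have hu : u = 0 := by
          ext i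
          fin_cases i
          · exact hu0
          · exact hu1
        simp [hu])).1
      norm_num at this
    · have := (h (v 0) (-(u 0)) (by
        ext i
        fin_cases i <;>
          simp only [PiLp.add_apply, PiLp.smul_apply, PiLp.neg_apply, smul_eq_mul,
            PiLp.zero_apply, Fin.mk_zero, Fin.mk_one] <;> nlinarith [hd, hu1])).2
      rw [neg_eq_zero] at this
      exact hu0 this
  · have := (h (v 1) (-(u 1)) (by
      ext i
      fin_cases i <;>
        simp only [PiLp.add_apply, PiLp.smul_apply, PiLp.neg_apply, smul_eq_mul,
          PiLp.zero_apply, Fin.mk_zero, Fin.mk_one] <;> nlinarith [hd])).2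
    rw [neg_eq_zero] at this
    exact hu1 this

/-- With four reference probes `a,b,c,d` (with `a,b,c` and `b,c,d` non-collinear)
and the three measurements `R(e,a,b,c)`, `R(e,a,c,d)`, `R(e,a,d,b)`, if the
determinant condition `|A_r A_g| ≠ 0` holds, then the position of probe `e`
is uniquely determined by the measurements and the reference positions. -/
theorem four_reference_probes (ρ : ℝ) (hρ : 0 < ρ)
    (pa pb pc pd pe : EuclideanSpace ℝ (Fin 2))
    (hnc1 : LinearIndependent ℝ ![pb - pa, pc - pa])
    (hnc2 : LinearIndependent ℝ ![pc - pb, pd - pb])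
    (hea : pe ≠ pa) (heb : pe ≠ pb) (hec : pe ≠ pc) (hed : pe ≠ pd)
    (hab : pa ≠ pb) (hac : pa ≠ pc) (had : pa ≠ pd)
    (hbc : pb ≠ pc) (hbd : pb ≠ pd) (hcd : pc ≠ pd) :
    let l : EuclideanSpace ℝ (Fin 2) → EuclideanSpace ℝ (Fin 2) → ℝ :=
      fun x y => ‖x - y‖ ^ 2
    -- `D` values computed from the three resistance measurements
    let D1 : ℝ := Real.exp (4 * Real.pi * fourProbeR ρ pe pa pb pc / ρ)
    let D2 : ℝ := Real.exp (4 * Real.pi * fourProbeR ρ pe pa pc pd / ρ)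
    let D3 : ℝ := Real.exp (4 * Real.pi * fourProbeR ρ pe pa pd pb / ρ)
    -- measurement matrix
    let Ar : Matrix (Fin 3) (Fin 4) ℝ :=
      !![D1 * l pb pc, -(l pa pc), 0, 0;
         D2 * l pc pd, 0, -(l pa pd), 0;
         D3 * l pb pd, 0, 0, -(l pa pb)]
    -- geometric affine relation `L = A_g L̃ + b_g`
    let Ag : Matrix (Fin 4) (Fin 3) ℝ :=
      (detV pb pc pd)⁻¹ •
        !![detV pa pc pd, detV pa pd pb, detV pa pb pc;
           detV pb pc pd, 0, 0;
           0, detV pb pc pd, 0;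
           0, 0, detV pb pc pd]
    (Ar * Ag).det ≠ 0 →
      ∀ pe' : EuclideanSpace ℝ (Fin 2),
        pe' ≠ pa → pe' ≠ pb → pe' ≠ pc → pe' ≠ pd →
        fourProbeR ρ pe' pa pb pc = fourProbeR ρ pe pa pb pc →
        fourProbeR ρ pe' pa pc pd = fourProbeR ρ pe pa pc pd →
        fourProbeR ρ pe' pa pd pb = fourProbeR ρ pe pa pd pb →
        pe' = pe := by
  intro l D1 D2 D3 Ar Ag hdet pe' h1 h2 h3 h4 hR1 hR2 hR3
  have hΔ : detV pb pc pd ≠ 0 := by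
    have := det_ne_zero_of_li (pc - pb) (pd - pb) hnc2
    simpa [detV] using this
  have hAr_eq : Ar = !![D1 * ‖pb - pc‖ ^ 2, -(‖pa - pc‖ ^ 2), 0, 0;
      D2 * ‖pc - pd‖ ^ 2, 0, -(‖pa - pd‖ ^ 2), 0;
      D3 * ‖pb - pd‖ ^ 2, 0, 0, -(‖pa - pb‖ ^ 2)] := rfl
  set L : EuclideanSpace ℝ (Fin 2) → (Fin 4 → ℝ) :=
    fun q => ![‖pa - q‖ ^ 2, ‖pb - q‖ ^ 2, ‖pc - q‖ ^ 2, ‖pd - q‖ ^ 2] with hLdef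
  set w : EuclideanSpace ℝ (Fin 2) → (Fin 3 → ℝ) :=
    fun q => ![‖pb - q‖ ^ 2, ‖pc - q‖ ^ 2, ‖pd - q‖ ^ 2] with hwdef
  have hArL : ∀ q : EuclideanSpace ℝ (Fin 2), q ≠ pa → q ≠ pb → q ≠ pc → q ≠ pd →
      Real.exp (4 * Real.pi * fourProbeR ρ q pa pb pc / ρ) = D1 →
      Real.exp (4 * Real.pi * fourProbeR ρ q pa pc pd / ρ) = D2 →
      Real.exp (4 * Real.pi * fourProbeR ρ q pa pd pb / ρ) = D3 →
      Ar *ᵥ (L q) = 0 := by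
    intro q hqa hqb hqc hqd e1 e2 e3
    have k1 := Dlem ρ hρ q pa pb pc hqa hqb hac hbc
    have k2 := Dlem ρ hρ q pa pc pd hqa hqc had hcd
    have k3 := Dlem ρ hρ q pa pd pb hqa hqd hab (Ne.symm hbd)
    rw [e1] at k1; rw [e2] at k2; rw [e3] at k3
    rw [norm_sub_rev pd pb] at k3
    funext i
    fin_cases i
    · simp [hAr_eq, hLdef, Matrix.mulVec, dotProduct, Fin.sum_univ_four]
      linarith [k1]
    · simp [hAr_eq, hLdef, Matrix.mulVec, dotProduct, Fin.sum_univ_four]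
      linarith [k2]
    · simp [hAr_eq, hLdef, Matrix.mulVec, dotProduct, Fin.sum_univ_four]
      linarith [k3]
  have hpe : Ar *ᵥ (L pe) = 0 := hArL pe hea heb hec hed rfl rfl rfl
  have hpe' : Ar *ᵥ (L pe') = 0 :=
    hArL pe' h1 h2 h3 h4 (by rw [hR1]) (by rw [hR2]) (by rw [hR3])
  have hAg_eq : Ag = (detV pb pc pd)⁻¹ •
      !![detV pa pc pd, detV pa pd pb, detV pa pb pc;
         detV pb pc pd, 0, 0;
         0, detV pb pc pd, 0;
         0, 0, detV pb pc pd] := rfl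
  have hAg : Ag *ᵥ (w pe') - Ag *ᵥ (w pe) = L pe' - L pe := by
    have hg := geo pa pb pc pd pe' pe
    funext i
    fin_cases i <;>
      simp [hAg_eq, hLdef, hwdef, Matrix.smul_mulVec, Matrix.mulVec,
          dotProduct, Fin.sum_univ_three] <;>
      field_simp <;>
      linarith [hg]
  have hkey : (Ar * Ag) *ᵥ (w pe') = (Ar * Ag) *ᵥ (w pe) := by
    have h0 : (Ar * Ag) *ᵥ (w pe') - (Ar * Ag) *ᵥ (w pe) = 0 := by
      rw [← Matrix.mulVec_mulVec, ← Matrix.mulVec_mulVec, ← Matrix.mulVec_sub, hAg,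
        Matrix.mulVec_sub, hpe, hpe', sub_zero]
    exact sub_eq_zero.mp h0
  have hunit : IsUnit (Ar * Ag) :=
    (Matrix.isUnit_iff_isUnit_det _).mpr (isUnit_iff_ne_zero.mpr hdet)
  have hw : w pe' = w pe := Matrix.mulVec_injective_iff_isUnit.mpr hunit hkey
  have hb := congrFun hw 0
  have hc := congrFun hw 1
  have hd := congrFun hw 2
  simp only [hwdef, Matrix.cons_val_zero, Matrix.cons_val_one, Matrix.head_cons,
    Matrix.cons_val_two, Matrix.tail_cons] at hb hc hd
  rw [esq pb pe', esq pb pe] at hb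
  rw [esq pc pe', esq pc pe] at hc
  rw [esq pd pe', esq pd pe] at hd
  have lin1 : (pc 0 - pb 0) * (pe' 0 - pe 0) + (pc 1 - pb 1) * (pe' 1 - pe 1) = 0 := by
    linear_combination (1/2 : ℝ) * hb - (1/2 : ℝ) * hc
  have lin2 : (pd 0 - pb 0) * (pe' 0 - pe 0) + (pd 1 - pb 1) * (pe' 1 - pe 1) = 0 := by
    linear_combination (1/2 : ℝ) * hb - (1/2 : ℝ) * hd
  have hΔc : (pc 0 - pb 0) * (pd 1 - pb 1) - (pc 1 - pb 1) * (pd 0 - pb 0) ≠ 0 := by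
    have := det_ne_zero_of_li (pc - pb) (pd - pb) hnc2
    simpa using this
  have h0 : pe' 0 = pe 0 := by
    have hz : ((pc 0 - pb 0) * (pd 1 - pb 1) - (pc 1 - pb 1) * (pd 0 - pb 0))
        * (pe' 0 - pe 0) = 0 := by
      linear_combination (pd 1 - pb 1) * lin1 - (pc 1 - pb 1) * lin2
    rcases mul_eq_zero.mp hz with h | h
    · exact absurd h hΔc
    · linarith
  have h1' : pe' 1 = pe 1 := by
    have hz : ((pc 0 - pb 0) * (pd 1 - pb 1) - (pc 1 - pb 1) * (pd 0 - pb 0))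
        * (pe' 1 - pe 1) = 0 := by
      linear_combination (pc 0 - pb 0) * lin2 - (pd 0 - pb 0) * lin1
    rcases mul_eq_zero.mp hz with h | h
    · exact absurd h hΔc
    · linarith
  ext i
  fin_cases i
  · exact h0
  · exact h1'
end

section
/- Let p_a, p_b, p_c be non-collinear points in ℝ² and p_d, p_e two further points, with l_{xy} = ‖p_x - p_y‖², q_d = (l_{ab}+l_{ad}-l_{bd}, l_{ac}+l_{ad}-l_{cd})ᵀ, q_e defined analogously, and G₂ the Gram matrix of v_{ab}, v_{ac}. Then 4 l_{de} = (q_d - q_e)ᵀ G₂⁻¹ (q_d - q_e). -/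
/-
If `v = ∑ cᵢ bᵢ` with the `bᵢ` linearly independent, the vector `g` of inner products `⟪bᵢ, v⟫`
is `G c` for the Gram matrix `G`, so `‖v‖² = c ⬝ G c = g ⬝ G⁻¹ g`. In the plane `v_ab, v_ac` span
everything, and by polarization `q_d - q_e = 2 (⟪v_ab, p_d - p_e⟫, ⟪v_ac, p_d - p_e⟫)`.
-/

open Matrix

open scoped InnerProductSpace

section Gram

variable {E ι : Type*} [NormedAddCommGroup E] [InnerProductSpace ℝ E] [Fintype ι]

theorem gram_mulVec_eq_inner_sum (b : ι → E) (c : ι → ℝ) :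
    gram ℝ b *ᵥ c = fun i => ⟪b i, ∑ j, c j • b j⟫_ℝ := by
  ext i
  simp [mulVec, dotProduct, inner_sum, inner_smul_right, mul_comm]

theorem norm_sum_smul_sq_eq_dotProduct_gram_mulVec (b : ι → E) (c : ι → ℝ) :
    ‖∑ i, c i • b i‖ ^ 2 = c ⬝ᵥ (gram ℝ b *ᵥ c) := by
  rw [← real_inner_self_eq_norm_sq, ← star_dotProduct_gram_mulVec, star_trivial]

theorem norm_sq_eq_dotProduct_inv_gram_mulVec [DecidableEq ι] {b : ι → E}
    (hb : LinearIndependent ℝ b) {v : E} (hv : v ∈ Submodule.span ℝ (Set.range b)) :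
    ‖v‖ ^ 2 = (fun i => ⟪b i, v⟫_ℝ) ⬝ᵥ ((gram ℝ b)⁻¹ *ᵥ fun i => ⟪b i, v⟫_ℝ) := by
  obtain ⟨c, rfl⟩ := Submodule.mem_span_range_iff_exists_fun ℝ |>.mp hv
  have hdet : IsUnit (gram ℝ b).det := (det_gram_ne_zero_iff_linearIndependent.mpr hb).isUnit
  rw [← gram_mulVec_eq_inner_sum, mulVec_mulVec, nonsing_inv_mul _ hdet, one_mulVec,
    dotProduct_comm, norm_sum_smul_sq_eq_dotProduct_gram_mulVec]

end Gram

theorem norm_sub_sq_add_norm_sub_sq_sub_norm_sub_sq {E : Type*} [NormedAddCommGroup E]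
    [InnerProductSpace ℝ E] (a b d : E) :
    ‖a - b‖ ^ 2 + ‖a - d‖ ^ 2 - ‖b - d‖ ^ 2 = 2 * ⟪b - a, d - a⟫_ℝ := by
  rw [norm_sub_rev a b, norm_sub_rev a d, ← sub_sub_sub_cancel_right b d a,
    norm_sub_sq_real (b - a)]
  ring

/-- With non-collinear `p_a, p_b, p_c` and further points `p_d, p_e`:
`4 l_de = (q_d - q_e)ᵀ G₂⁻¹ (q_d - q_e)`. -/
theorem sq_dist_de_quadratic_form (pa pb pc pd pe : EuclideanSpace ℝ (Fin 2))
    (hnc : LinearIndependent ℝ ![pb - pa, pc - pa]) :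
    let l : EuclideanSpace ℝ (Fin 2) → EuclideanSpace ℝ (Fin 2) → ℝ :=
      fun x y => ‖x - y‖ ^ 2
    let G2 : Matrix (Fin 2) (Fin 2) ℝ :=
      !![inner (𝕜 := ℝ) (pb - pa) (pb - pa), inner (𝕜 := ℝ) (pb - pa) (pc - pa);
         inner (𝕜 := ℝ) (pc - pa) (pb - pa), inner (𝕜 := ℝ) (pc - pa) (pc - pa)]
    let qd : Fin 2 → ℝ :=
      ![l pa pb + l pa pd - l pb pd, l pa pc + l pa pd - l pc pd]
    let qe : Fin 2 → ℝ :=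
      ![l pa pb + l pa pe - l pb pe, l pa pc + l pa pe - l pc pe]
    4 * l pd pe = (qd - qe) ⬝ᵥ (G2⁻¹ *ᵥ (qd - qe)) := by
  intro l G2 qd qe
  set b := ![pb - pa, pc - pa]
  set g : Fin 2 → ℝ := fun i => ⟪b i, pd - pe⟫_ℝ
  have hG2 : G2 = gram ℝ b := by
    ext i j; fin_cases i <;> fin_cases j <;> rfl
  have hq : qd - qe = (2 : ℝ) • g := by
    ext i
    fin_cases i <;>
      simp [qd, qe, l, g, b, norm_sub_sq_add_norm_sub_sq_sub_norm_sub_sq, inner_sub_right] <;> ring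
  have hspan : Submodule.span ℝ (Set.range b) = ⊤ :=
    hnc.span_eq_top_of_card_eq_finrank' (by simp)
  rw [hG2, hq, mulVec_smul, smul_dotProduct, dotProduct_smul,
    ← norm_sq_eq_dotProduct_inv_gram_mulVec hnc (hspan ▸ Submodule.mem_top)]
  simp only [l, smul_eq_mul]
  ring
end
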